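/- arXiv:2601.02435 — 5 statements merged into one kernel-verified Lean document; each statement's English description precedes it below -/
import Mathlib

section
/- Let V be a complex inner product space, let τ, τ⊥ ∈ V be unit vectors with ⟨τ, τ⊥⟩ = 0, let θ ∈ ℝ, and set φ₀ = cos θ · τ⊥ + sin θ · τ. Define U_f x = x − 2⟨τ, x⟩·τ, D x = 2⟨φ₀, x⟩·φ₀ − x, and G = D ∘ U_f. Then G acts on the plane spanned by τ⊥ and τ as a rotation by angle 2θ: G τ⊥ = cos(2θ)·τ⊥ + sin(2θ)·τ and G τ = −sin(2θ)·τ⊥ + cos(2θ)·τ. -/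
open scoped ComplexInnerProductSpace
open Real

theorem grover_rotation {V : Type*} [NormedAddCommGroup V] [InnerProductSpace ℂ V]
    (τ τperp : V) (hτ : ‖τ‖ = 1) (hτperp : ‖τperp‖ = 1) (horth : ⟪τ, τperp⟫ = 0)
    (θ : ℝ) (φ₀ : V) (hφ₀ : φ₀ = (Real.cos θ : ℂ) • τperp + (Real.sin θ : ℂ) • τ)
    (Uf D G : V → V)
    (hUf : ∀ x, Uf x = x - (2 * ⟪τ, x⟫) • τ)
    (hD : ∀ x, D x = (2 * ⟪φ₀, x⟫) • φ₀ - x)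
    (hG : G = D ∘ Uf) :
    G τperp = (Real.cos (2 * θ) : ℂ) • τperp + (Real.sin (2 * θ) : ℂ) • τ ∧
    G τ = -(Real.sin (2 * θ) : ℂ) • τperp + (Real.cos (2 * θ) : ℂ) • τ := by
  have hττ : ⟪τ, τ⟫ = 1 := by
    rw [inner_self_eq_norm_sq_to_K, hτ]; norm_num
  have hpp : ⟪τperp, τperp⟫ = 1 := by
    rw [inner_self_eq_norm_sq_to_K, hτperp]; norm_num
  have horth' : ⟪τperp, τ⟫ = 0 := by
    rw [← inner_conj_symm, horth, map_zero]
  have hφp : ⟪φ₀, τperp⟫ = (Real.cos θ : ℂ) := by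
    rw [hφ₀, inner_add_left, inner_smul_left, inner_smul_left, hpp, horth]
    simp [← Complex.ofReal_cos, ← Complex.ofReal_sin, Complex.conj_ofReal]
  have hφτ : ⟪φ₀, τ⟫ = (Real.sin θ : ℂ) := by
    rw [hφ₀, inner_add_left, inner_smul_left, inner_smul_left, hττ, horth']
    simp [← Complex.ofReal_cos, ← Complex.ofReal_sin, Complex.conj_ofReal]
  have hUfp : Uf τperp = τperp := by
    rw [hUf, horth]; simp
  have hUfτ : Uf τ = -τ := by
    rw [hUf, hττ]
    match_scalars <;> ring
  subst hG
  constructor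
  · show D (Uf τperp) = _
    rw [hUfp, hD, hφp, hφ₀, Real.cos_two_mul, Real.sin_two_mul]
    push_cast
    match_scalars <;> ring
  · show D (Uf τ) = _
    rw [hUfτ, hD, inner_neg_right, hφτ, hφ₀, Real.cos_two_mul, Real.sin_two_mul]
    push_cast
    have h : Complex.cos θ ^ 2 + Complex.sin θ ^ 2 = 1 := Complex.cos_sq_add_sin_sq θ
    match_scalars
    · ring
    · linear_combination -2*h
end

section
/- Let V be a complex inner product space, let τ, τ⊥ ∈ V be unit vectors with ⟨τ, τ⊥⟩ = 0, let θ ∈ ℝ, and set φ₀ = cos θ · τ⊥ + sin θ · τ. Define U_f x = x − 2⟨τ, x⟩·τ, D x = 2⟨φ₀, x⟩·φ₀ − x, and G = D ∘ U_f. Then for every natural number t, the t-fold iterate satisfies G^t φ₀ = cos((2t+1)θ)·τ⊥ + sin((2t+1)θ)·τ. -/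
open scoped ComplexInnerProductSpace

theorem grover_iterate {V : Type*} [NormedAddCommGroup V] [InnerProductSpace ℂ V]
    (τ τperp : V) (hτ : ‖τ‖ = 1) (hτperp : ‖τperp‖ = 1) (horth : ⟪τ, τperp⟫ = 0)
    (θ : ℝ) (φ₀ : V) (hφ₀ : φ₀ = (Real.cos θ : ℂ) • τperp + (Real.sin θ : ℂ) • τ)
    (Uf D G : V → V)
    (hUf : ∀ x, Uf x = x - (2 * ⟪τ, x⟫) • τ)
    (hD : ∀ x, D x = (2 * ⟪φ₀, x⟫) • φ₀ - x)
    (hG : G = D ∘ Uf) (t : ℕ) :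
    G^[t] φ₀ = (Real.cos ((2 * t + 1) * θ) : ℂ) • τperp
      + (Real.sin ((2 * t + 1) * θ) : ℂ) • τ := by
  have hττ : ⟪τ, τ⟫ = 1 := by
    rw [inner_self_eq_norm_sq_to_K, hτ]; norm_num
  have hpp : ⟪τperp, τperp⟫ = 1 := by
    rw [inner_self_eq_norm_sq_to_K, hτperp]; norm_num
  have hpt : ⟪τperp, τ⟫ = 0 := by
    rw [← inner_conj_symm, horth, map_zero]
  have key : ∀ α : ℝ, G ((Real.cos α : ℂ) • τperp + (Real.sin α : ℂ) • τ)
      = (Real.cos (α + 2*θ) : ℂ) • τperp + (Real.sin (α + 2*θ) : ℂ) • τ := by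
    intro α
    rw [hG]
    simp only [Function.comp_apply, hUf, hD, hφ₀]
    simp only [inner_add_right, inner_smul_right, inner_sub_right, inner_add_left,
      inner_smul_left, Complex.conj_ofReal, hττ, hpp, hpt, horth,
      mul_zero, mul_one, zero_add, add_zero, zero_mul]
    have c1 : Real.cos (α + 2*θ) =
        2*(Real.cos θ*Real.cos α - Real.sin θ*Real.sin α)*Real.cos θ - Real.cos α := by
      rw [Real.cos_add, Real.cos_two_mul, Real.sin_two_mul]; ring
    have c2 : Real.sin (α + 2*θ) =
        2*(Real.cos θ*Real.cos α - Real.sin θ*Real.sin α)*Real.sin θ + Real.sin α := by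
      rw [Real.sin_add, Real.cos_two_mul, Real.sin_two_mul]
      linear_combination (2*Real.sin α) * Real.sin_sq_add_cos_sq θ
    rw [c1, c2]
    push_cast
    match_scalars <;> ring
  induction t with
  | zero => simpa using hφ₀
  | succ n ih =>
    rw [Function.iterate_succ_apply', ih, key]
    have h2 : ((2*(n:ℝ)+1)*θ + 2*θ) = (2*((n+1:ℕ):ℝ)+1)*θ := by push_cast; ring
    rw [h2]
end

section
/- Let V be a complex inner product space, let τ, τ⊥ ∈ V be unit vectors with ⟨τ, τ⊥⟩ = 0, let θ ∈ ℝ, and set φ₀ = cos θ · τ⊥ + sin θ · τ. Define U_f x = x − 2⟨τ, x⟩·τ, D x = 2⟨φ₀, x⟩·φ₀ − x, and G = D ∘ U_f. Then for every natural number t, the probability of obtaining the target outcome τ upon projectively measuring the state G^t φ₀ equals sin²((2t+1)θ); that is, ‖⟨τ, G^t φ₀⟩‖² = sin²((2t+1)θ). -/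
open scoped ComplexInnerProductSpace

theorem grover_success_probability {V : Type*} [NormedAddCommGroup V] [InnerProductSpace ℂ V]
    (τ τperp : V) (hτ : ‖τ‖ = 1) (hτperp : ‖τperp‖ = 1) (horth : ⟪τ, τperp⟫ = 0)
    (θ : ℝ) (φ₀ : V) (hφ₀ : φ₀ = (Real.cos θ : ℂ) • τperp + (Real.sin θ : ℂ) • τ)
    (Uf D G : V → V)
    (hUf : ∀ x, Uf x = x - (2 * ⟪τ, x⟫) • τ)
    (hD : ∀ x, D x = (2 * ⟪φ₀, x⟫) • φ₀ - x)
    (hG : G = D ∘ Uf) (t : ℕ) :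
    ‖⟪τ, G^[t] φ₀⟫‖ ^ 2 = Real.sin ((2 * t + 1) * θ) ^ 2 := by
  have hττ : ⟪τ, τ⟫ = 1 := by
    rw [inner_self_eq_norm_sq_to_K, hτ]; norm_num
  have hpp : ⟪τperp, τperp⟫ = 1 := by
    rw [inner_self_eq_norm_sq_to_K, hτperp]; norm_num
  have horth' : ⟪τperp, τ⟫ = 0 := by
    rw [← inner_conj_symm, horth]; simp
  have key : ∀ a : ℝ, G ((Real.cos a : ℂ) • τperp + (Real.sin a : ℂ) • τ)
      = (Real.cos (a + 2*θ) : ℂ) • τperp + (Real.sin (a + 2*θ) : ℂ) • τ := by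
    intro a
    rw [hG, Function.comp_apply, hUf, hD, hφ₀]
    simp only [inner_add_right, inner_smul_right, inner_sub_right, inner_add_left,
      inner_smul_left, Complex.conj_ofReal, hττ, hpp, horth, horth']
    match_scalars
    · simp only [Complex.cos_add, Complex.sin_add, Complex.cos_two_mul, Complex.sin_two_mul]
      ring
    · simp only [Complex.cos_add, Complex.sin_add, Complex.cos_two_mul, Complex.sin_two_mul]
      linear_combination (-2 * Complex.sin (a:ℂ)) * Complex.sin_sq_add_cos_sq (θ:ℂ)
  have main : ∀ t : ℕ, G^[t] φ₀
      = (Real.cos ((2*t+1)*θ) : ℂ) • τperp + (Real.sin ((2*t+1)*θ) : ℂ) • τ := by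
    intro t
    induction t with
    | zero => simpa using hφ₀
    | succ n ih =>
      rw [Function.iterate_succ_apply', ih, key]
      have h : (2*(n:ℝ)+1)*θ + 2*θ = (2*((n+1:ℕ):ℝ)+1)*θ := by push_cast; ring
      rw [h]
  rw [main t]
  simp only [inner_add_right, inner_smul_right, hττ, horth, mul_zero, mul_one, zero_add]
  rw [Complex.norm_real]
  exact sq_abs _
end

section
/- Let n ≥ 1 be a natural number, set N = 2ⁿ and θ = arcsin(1/√N), and define the success probability p(t) = sin²((2t+1)θ) for natural numbers t. Then for every natural number t with 0 < t and (t+1 : ℝ) ≤ π/(4θ) − 1/2, one has 0 < p(t+1) − p(t); that is, the success probability is strictly increasing in this range. -/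
open Real

/-- Success probability of Grover's algorithm after `t` iterations on `n` qubits. -/
noncomputable def groverProb (n t : ℕ) : ℝ :=
  Real.sin ((2 * t + 1) * Real.arcsin (1 / Real.sqrt (2 ^ n))) ^ 2

theorem grover_prob_strict_mono (n : ℕ) (hn : 1 ≤ n) (t : ℕ) (ht : 0 < t)
    (hub : (t : ℝ) + 1 ≤ π / (4 * Real.arcsin (1 / Real.sqrt (2 ^ n))) - 1 / 2) :
    0 < groverProb n (t + 1) - groverProb n t := by
  set x : ℝ := 1 / Real.sqrt (2 ^ n) with hx
  have hxpos : 0 < x := by positivity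
  have hx1 : x ≤ 1 := by
    rw [hx, div_le_one (by positivity)]
    have : (1 : ℝ) ≤ (2 : ℝ) ^ n := one_le_pow₀ (by norm_num)
    calc (1 : ℝ) = Real.sqrt 1 := (Real.sqrt_one).symm
      _ ≤ Real.sqrt (2 ^ n) := Real.sqrt_le_sqrt this
  set θ : ℝ := Real.arcsin x with hθ
  have hθpos : 0 < θ := Real.arcsin_pos.mpr hxpos
  have hub' : ((4 : ℝ) * t + 6) * θ ≤ π := by
    have h4θ : 0 < 4 * θ := by linarith
    have := (le_div_iff₀ h4θ).mp (by linarith : (t : ℝ) + 3 / 2 ≤ π / (4 * θ))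
    linarith
  have hb : (2 * ((t : ℝ) + 1) + 1) * θ ≤ π / 2 := by nlinarith
  have ha : 0 < (2 * (t : ℝ) + 1) * θ := by positivity
  have hab : (2 * (t : ℝ) + 1) * θ < (2 * ((t : ℝ) + 1) + 1) * θ := by nlinarith
  have hsin : Real.sin ((2 * (t : ℝ) + 1) * θ) < Real.sin ((2 * ((t : ℝ) + 1) + 1) * θ) := by
    apply Real.strictMonoOn_sin ⟨by linarith [Real.pi_pos], by linarith⟩
      ⟨by linarith [Real.pi_pos], hb⟩ hab
  have hsa : 0 < Real.sin ((2 * (t : ℝ) + 1) * θ) :=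
    Real.sin_pos_of_pos_of_lt_pi ha (by linarith [Real.pi_pos])
  have := pow_lt_pow_left₀ hsin hsa.le (n := 2) (by norm_num)
  simp only [groverProb, ← hθ, ← hx]
  push_cast
  nlinarith [this]
end

section
/- Let n ≥ 1 be a natural number, set N = 2ⁿ and θ = arcsin(1/√N), define the success probability p(t) = sin²((2t+1)θ) for natural numbers t, and let t₀ = ⌊π/(4θ) − 1/2⌋ be the floor of the theoretical optimum. Then for every natural number t' with (2t'+1)θ ≤ π, either p(t') ≤ p(t₀) or p(t') ≤ p(t₀ + 1); that is, within one period the success probability is maximized at the floor or the ceiling of the theoretical optimal iteration count. -/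
open Real

theorem grover_optimal_iterations (n : ℕ) (hn : 1 ≤ n)
    (t₀ : ℕ)
    (ht₀ : t₀ = ⌊π / (4 * Real.arcsin (1 / Real.sqrt (2 ^ n))) - 1 / 2⌋₊)
    (t' : ℕ)
    (ht' : (2 * (t' : ℝ) + 1) * Real.arcsin (1 / Real.sqrt (2 ^ n)) ≤ π) :
    groverProb n t' ≤ groverProb n t₀ ∨ groverProb n t' ≤ groverProb n (t₀ + 1) := by
  set θ := Real.arcsin (1 / Real.sqrt (2 ^ n)) with hθdef
  have hN : (0:ℝ) < Real.sqrt (2 ^ n) := Real.sqrt_pos.2 (by positivity)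
  have hx1 : (0:ℝ) < 1 / Real.sqrt (2 ^ n) := by positivity
  have hθpos : 0 < θ := Real.arcsin_pos.2 hx1
  have hθle : θ ≤ π / 2 := Real.arcsin_le_pi_div_two _
  have hpi : 0 < π := Real.pi_pos
  have h4θ : (0:ℝ) < 4 * θ := by linarith
  -- floor bounds
  have hfl : (t₀ : ℝ) ≤ π / (4 * θ) - 1 / 2 := by
    rw [ht₀]
    apply Nat.floor_le
    have : (1:ℝ)/2 ≤ π / (4 * θ) := by
      rw [le_div_iff₀ h4θ]; nlinarith
    linarith
  have hfl' : ((t₀ : ℝ) + 1/2) * (4 * θ) ≤ π := by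
    have h := (le_div_iff₀ h4θ).mp (by linarith : (t₀ : ℝ) + 1/2 ≤ π / (4 * θ))
    linarith
  have hlo : (2 * (t₀ : ℝ) + 1) * θ ≤ π / 2 := by nlinarith
  have hceil : π / (4 * θ) - 1 / 2 < (t₀ : ℝ) + 1 := by
    rw [ht₀]; push_cast; exact Nat.lt_floor_add_one _
  have hhi : π / 2 < (2 * ((t₀ : ℝ) + 1) + 1) * θ := by
    have h := (div_lt_iff₀ h4θ).mp (by linarith : π / (4 * θ) < (t₀ : ℝ) + 3/2)
    nlinarith
  -- monotonicity helper
  have mono : ∀ a b : ℝ, 0 ≤ a → a ≤ b → b ≤ π / 2 → Real.sin a ≤ Real.sin b := by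
    intro a b ha hab hb
    exact Real.strictMonoOn_sin.monotoneOn ⟨by linarith, by linarith⟩
      ⟨by linarith, hb⟩ hab
  rcases le_or_gt t' t₀ with hc | hc
  · left
    have hcast : (t' : ℝ) ≤ (t₀ : ℝ) := by exact_mod_cast hc
    have h1 : (0:ℝ) ≤ (2 * (t' : ℝ) + 1) * θ := by positivity
    have h2 : (2 * (t' : ℝ) + 1) * θ ≤ (2 * (t₀ : ℝ) + 1) * θ := by nlinarith
    have hsin := mono _ _ h1 h2 hlo
    simp only [groverProb, ← hθdef]
    have hnn : 0 ≤ Real.sin ((2 * (t' : ℝ) + 1) * θ) :=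
      Real.sin_nonneg_of_nonneg_of_le_pi h1 (by linarith)
    exact pow_le_pow_left₀ hnn hsin 2
  · right
    have hcast : (t₀ : ℝ) + 1 ≤ (t' : ℝ) := by exact_mod_cast hc
    set A := (2 * ((t₀ : ℝ) + 1) + 1) * θ with hA
    set B := (2 * (t' : ℝ) + 1) * θ with hB
    have hAB : A ≤ B := by nlinarith
    have hB0 : (0:ℝ) ≤ B := by positivity
    have hsin : Real.sin B ≤ Real.sin A := by
      rw [← Real.sin_pi_sub B, ← Real.sin_pi_sub A]
      exact mono _ _ (by linarith) (by linarith) (by linarith)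
    have hnn : 0 ≤ Real.sin B := Real.sin_nonneg_of_nonneg_of_le_pi hB0 ht'
    simp only [groverProb, ← hθdef]
    have : ((2 * ((t₀:ℕ) + 1 : ℕ) : ℝ) + 1) * θ = A := by push_cast [hA]; ring
    calc Real.sin B ^ 2 ≤ Real.sin A ^ 2 := pow_le_pow_left₀ hnn hsin 2
      _ = _ := by rw [← this]
end
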